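/- arXiv:1409.4955 — 4 statements merged into one kernel-verified Lean document; each statement's English description precedes it below -/
import Mathlib

section
/- Fix integers n ≥ 2 and 1 ≤ ℓ ≤ m ≤ n. Let x ∈ {0,1}^n be a string with exactly m coordinates equal to 0, and let y be obtained from x by flipping each coordinate independently with probability 1/n. Then the probability that y has exactly m − ℓ coordinates equal to 0 is λ_{n,m,ℓ} = (1 − 1/n)^n (n−1)^{−ℓ} Σ_{0 ≤ j ≤ min(n−m, m−ℓ)} C(n−m, j) C(m, j+ℓ) (n−1)^{−2j}. -/
open Filter MeasureTheory Real

namespace EA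

/-- The transition probability `λ_{n,m,ℓ}`. -/
noncomputable def lam (n m ℓ : ℕ) : ℝ :=
  (1 - 1/(n:ℝ))^n * ((n:ℝ) - 1)^(-(ℓ:ℤ)) *
    ∑ j ∈ Finset.range (min (n - m) (m - ℓ) + 1),
      ((n - m).choose j : ℝ) * (m.choose (j + ℓ) : ℝ) * ((n:ℝ) - 1)^(-(2*(j:ℤ)))

/-- `Λ_{n,m} = Σ_{1 ≤ ℓ ≤ m} λ_{n,m,ℓ}`. -/
noncomputable def Lam (n m : ℕ) : ℝ := ∑ ℓ ∈ Finset.range m, lam n m (ℓ + 1)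

/-- The probability generating function `P_{n,m}(t)` of `X_{n,m}`. -/
noncomputable def Pgen (n : ℕ) : ℕ → ℝ → ℝ
  | 0, _ => 1
  | (m+1), t =>
      (t * ∑ ℓ ∈ Finset.range (m+1), lam n (m+1) (ℓ+1) * Pgen n (m - ℓ) t) /
        (1 - (1 - Lam n (m+1)) * t)
  decreasing_by exact Nat.lt_succ_of_le (Nat.sub_le m ℓ)

/-- The entire function `S_r(z)`. -/
noncomputable def S (r : ℕ) (z : ℝ) : ℝ :=
  ∑' ℓ : ℕ, (z^(ℓ+1) / (Nat.factorial (ℓ+1) : ℝ)) *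
    ∑ j ∈ Finset.range (ℓ+1), ((ℓ + 1 - j : ℕ) : ℝ)^r * (1 - z)^j / (Nat.factorial j : ℝ)

/-- Harmonic numbers `H_m`. -/
noncomputable def Hm (m : ℕ) : ℝ := ∑ j ∈ Finset.range m, 1/((j:ℝ)+1)

/-- Second-order harmonic numbers `H_m^{(2)}`. -/
noncomputable def Hm2 (m : ℕ) : ℝ := ∑ j ∈ Finset.range m, 1/((j:ℝ)+1)^2

/-- `φ₁(z) = ∫_0^z (1/S₁(t) - 1/t) dt`. -/
noncomputable def phi1 (z : ℝ) : ℝ := ∫ t in (0:ℝ)..z, (1 / S 1 t - 1 / t)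

/-- `φ₂(z)`. -/
noncomputable def phi2 (z : ℝ) : ℝ :=
  1/2 - ∫ x in (0:ℝ)..z,
    (S 2 x * deriv (S 1) x / (2 * (S 1 x)^3) - S 0 x / (S 1 x)^2
      - 1/(2 * S 1 x) - 1/(2*x^2) + 1/x)

/-- `ψ₁(z)`. -/
noncomputable def psi1 (z : ℝ) : ℝ :=
  ∫ x in (0:ℝ)..z, (S 2 x / (S 1 x)^3 - 1/x^2 + 2/x)

/-- `ψ₂(z)`. -/
noncomputable def psi2 (z : ℝ) : ℝ :=
  7/12 - ∫ x in (0:ℝ)..z,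
    (5 * deriv (S 1) x * (S 2 x)^2 / (2*(S 1 x)^5)
      - (2 * deriv (S 1) x * S 3 x + S 2 x * deriv (S 2) x + 6 * S 0 x * S 2 x) / (2*(S 1 x)^4)
      - S 0 x / (S 1 x)^3 + 2/(S 1 x)^2 - 1/x^3 + 3/x^2 - 11/(2*x))

/-- The mean sequence `μ_{n,m}`. -/
noncomputable def mu (n : ℕ) : ℕ → ℝ
  | 0 => 0
  | (m+1) =>
      (1 + ∑ ℓ ∈ Finset.range (m+1), lam n (m+1) (ℓ+1) * mu n (m - ℓ)) / Lam n (m+1)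
  decreasing_by exact Nat.lt_succ_of_le (Nat.sub_le m ℓ)

/-- The variance sequence `σ²_{n,m}`, the unique solution of
`Σ_{1≤ℓ≤m} λ_{n,m,ℓ}(σ²_{n,m} − σ²_{n,m−ℓ}) = −1 + Σ_{1≤ℓ≤m} λ_{n,m,ℓ}(μ_{n,m} − μ_{n,m−ℓ})²`
with `σ²_{n,0} = 0`. -/
noncomputable def varX (n : ℕ) : ℕ → ℝ
  | 0 => 0
  | (m+1) =>
      (-1 + ∑ ℓ ∈ Finset.range (m+1), lam n (m+1) (ℓ+1) *
          (varX n (m - ℓ) + (mu n (m+1) - mu n (m - ℓ))^2)) / Lam n (m+1)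
  decreasing_by exact Nat.lt_succ_of_le (Nat.sub_le m ℓ)

/-- The normalized transition probability `λ*_{n,m,ℓ}`. -/
noncomputable def lamStar (n m ℓ : ℕ) : ℝ :=
  ∑ j ∈ Finset.range (min (n + 1 - m) (m - ℓ) + 1),
    ((n + 1 - m).choose j : ℝ) * (m.choose (j + ℓ) : ℝ) * (n:ℝ)^(-((ℓ:ℤ) + 2*j))

/-- The probability generating function `Q_{n,m}` for LeadingOnes. -/
noncomputable def QLO (p : ℝ) (n : ℕ) : ℕ → ℝ → ℝ
  | 0, _ => 1
  | (m+1), t =>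
      (p * (1-p)^(n-(m+1)) * t / (1 - (1 - p*(1-p)^(n-(m+1))) * t)) *
        ((2:ℝ)^(-(m:ℤ)) + ∑ ℓ ∈ Finset.range m, QLO p n (m-ℓ) t / 2^(ℓ+1))
  decreasing_by exact Nat.lt_succ_of_le (Nat.sub_le m ℓ)

/-- The mean `ν_{n,m}` of `Y_{n,m}` (LeadingOnes). -/
noncomputable def nuLO (p : ℝ) (n : ℕ) : ℕ → ℝ
  | 0 => 0
  | (m+1) =>
      1/(p*(1-p)^(n-(m+1))) + ∑ ℓ ∈ Finset.range m, nuLO p n (m-ℓ) / 2^(ℓ+1)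
  decreasing_by exact Nat.lt_succ_of_le (Nat.sub_le m ℓ)

/-- The second moment `s_{n,m}` of `Y_{n,m}` (LeadingOnes). -/
noncomputable def sLO (p : ℝ) (n : ℕ) : ℕ → ℝ
  | 0 => 0
  | (m+1) =>
      (2 * nuLO p n (m+1) - 1)/(p*(1-p)^(n-(m+1)))
        + ∑ ℓ ∈ Finset.range m, sLO p n (m-ℓ) / 2^(ℓ+1)
  decreasing_by exact Nat.lt_succ_of_le (Nat.sub_le m ℓ)


private lemma pow_aux (n k : ℕ) (hn : 2 ≤ n) (hk : k ≤ n) :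
    (1/(n:ℝ))^k * (1 - 1/(n:ℝ))^(n-k) = (1 - 1/(n:ℝ))^n * ((n:ℝ)-1)^(-(k:ℤ)) := by
  have hn0 : (n:ℝ) ≠ 0 := by positivity
  have hc : (0:ℝ) < (n:ℝ) - 1 := by
    have : (2:ℝ) ≤ n := by exact_mod_cast hn
    linarith
  have hc0 : ((n:ℝ) - 1) ≠ 0 := hc.ne'
  have h1 : (1 - 1/(n:ℝ)) = ((n:ℝ)-1) / n := by field_simp
  rw [h1, zpow_neg, zpow_natCast, ← pow_sub_mul_pow (((n:ℝ)-1)/n) hk]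
  rw [div_pow, div_pow, div_pow]
  field_simp
  ring

/-- The probability (over independent per-coordinate flips with
probability `1/n`) that the flipped string has exactly `m - ℓ` zero coordinates,
starting from a string with exactly `m` zeros, equals `λ_{n,m,ℓ}`. -/
theorem onemax_transition_probability
    (n m ℓ : ℕ) (hn : 2 ≤ n) (hℓ1 : 1 ≤ ℓ) (hℓm : ℓ ≤ m) (hmn : m ≤ n)
    (x : Fin n → Bool)
    (hx : (Finset.univ.filter (fun i => x i = false)).card = m) :
    ∑ f : Fin n → Bool,
      (if (Finset.univ.filter (fun i => (if f i then !(x i) else x i) = false)).card = m - ℓ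
        then ∏ i : Fin n, (if f i then (1/(n:ℝ)) else 1 - 1/(n:ℝ)) else 0)
      = lam n m ℓ := by
  classical
  set p : ℝ := 1/(n:ℝ) with hp
  set q : ℝ := 1 - 1/(n:ℝ) with hq
  set A : Finset (Fin n) := Finset.univ.filter (fun i => x i = false) with hA
  have hBcard : Aᶜ.card = n - m := by
    rw [Finset.card_compl, hx, Fintype.card_fin]
  -- Step 1: reindex flips by their support
  let e : Finset (Fin n) ≃ (Fin n → Bool) :=
    { toFun := fun F i => decide (i ∈ F)
      invFun := fun f => Finset.univ.filter (fun i => f i = true)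
      left_inv := by intro F; ext i; simp
      right_inv := by intro f; funext i; simp }
  rw [← Equiv.sum_comp e (fun f : Fin n → Bool =>
      (if (Finset.univ.filter (fun i => (if f i then !(x i) else x i) = false)).card = m - ℓ
        then ∏ i : Fin n, (if f i then p else q) else 0))]
  -- Step 2: per-subset formula
  have hterm : ∀ F : Finset (Fin n),
      (if (Finset.univ.filter
            (fun i => (if e F i then !(x i) else x i) = false)).card = m - ℓ
        then ∏ i : Fin n, (if e F i then p else q) else 0)
      = (if (F ∩ Aᶜ).card + (m - (F ∩ A).card) = m - ℓ
          then p ^ F.card * q ^ (n - F.card) else 0) := by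
    intro F
    have hzset : (Finset.univ.filter
        (fun i => (if e F i then !(x i) else x i) = false))
        = (F ∩ Aᶜ) ∪ (A \ F) := by
      ext i
      by_cases hi : i ∈ F <;> simp [e, hi, hA] <;> cases x i <;> simp
    have hdisj : Disjoint (F ∩ Aᶜ) (A \ F) := by
      rw [Finset.disjoint_left]
      intro i h1 h2
      exact (Finset.mem_compl.1 (Finset.mem_inter.1 h1).2) (Finset.mem_sdiff.1 h2).1
    have hzcard : (Finset.univ.filter
        (fun i => (if e F i then !(x i) else x i) = false)).card
        = (F ∩ Aᶜ).card + (m - (A ∩ F).card) := by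
      rw [hzset, Finset.card_union_of_disjoint hdisj]
      congr 1
      have := Finset.card_inter_add_card_sdiff A F
      omega
    have hprod : (∏ i : Fin n, (if e F i then p else q))
        = p ^ F.card * q ^ (n - F.card) := by
      have he : ∀ i, (e F i = true) = (i ∈ F) := by intro i; simp [e]
      simp only [he]
      rw [Finset.prod_ite, Finset.prod_const, Finset.prod_const]
      have h1 : Finset.univ.filter (fun i => i ∈ F) = F := by ext i; simp
      have h2 : Finset.univ.filter (fun i => i ∉ F) = Fᶜ := by ext i; simp
      rw [h1, h2, Finset.card_compl, Fintype.card_fin]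
    rw [hzcard, hprod, Finset.inter_comm A F]
  simp only [hterm]
  -- Step 3: biject subsets with pairs (S, T), S ⊆ A, T ⊆ Aᶜ
  have hstep3 : ∑ F : Finset (Fin n),
      (if (F ∩ Aᶜ).card + (m - (F ∩ A).card) = m - ℓ
        then p ^ F.card * q ^ (n - F.card) else 0)
      = ∑ P ∈ A.powerset ×ˢ Aᶜ.powerset,
        (if P.2.card + (m - P.1.card) = m - ℓ
          then p ^ (P.1.card + P.2.card) * q ^ (n - (P.1.card + P.2.card)) else 0) := by
    refine Finset.sum_nbij' (fun F => (F ∩ A, F ∩ Aᶜ)) (fun P => P.1 ∪ P.2) ?_ ?_ ?_ ?_ ?_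
    · intro F _
      simp [Finset.mem_product, Finset.inter_subset_right]
    · intro P _; exact Finset.mem_univ _
    · intro F _
      simp only
      rw [← Finset.inter_union_distrib_left, Finset.union_compl, Finset.inter_univ]
    · intro P hP
      rw [Finset.mem_product, Finset.mem_powerset, Finset.mem_powerset] at hP
      obtain ⟨h1, h2⟩ := hP
      have e1 : (P.1 ∪ P.2) ∩ A = P.1 := by
        ext i
        simp only [Finset.mem_inter, Finset.mem_union]
        constructor
        · rintro ⟨h | h, hia⟩
          · exact h
          · exact absurd hia (Finset.mem_compl.1 (h2 h))
        · intro h; exact ⟨Or.inl h, h1 h⟩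
      have e2 : (P.1 ∪ P.2) ∩ Aᶜ = P.2 := by
        ext i
        simp only [Finset.mem_inter, Finset.mem_union, Finset.mem_compl]
        constructor
        · rintro ⟨h | h, hia⟩
          · exact absurd (h1 h) hia
          · exact h
        · intro h; exact ⟨Or.inr h, Finset.mem_compl.1 (h2 h)⟩
      exact Prod.ext e1 e2
    · intro F _
      simp only
      have hd : Disjoint (F ∩ A) (F ∩ Aᶜ) :=
        Finset.disjoint_left.2 fun i h1 h2 =>
          (Finset.mem_compl.1 (Finset.mem_inter.1 h2).2) (Finset.mem_inter.1 h1).2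
      have hcard : (F ∩ A).card + (F ∩ Aᶜ).card = F.card := by
        rw [← Finset.card_union_of_disjoint hd, ← Finset.inter_union_distrib_left,
          Finset.union_compl, Finset.inter_univ]
      rw [hcard]
  rw [hstep3, Finset.sum_product]
  -- Step 4: group by cardinalities
  have hstep4 : ∑ S ∈ A.powerset, ∑ T ∈ Aᶜ.powerset,
      (if T.card + (m - S.card) = m - ℓ
        then p ^ (S.card + T.card) * q ^ (n - (S.card + T.card)) else 0)
      = ∑ a ∈ Finset.range (m+1), ∑ j ∈ Finset.range (n-m+1),
        ((m.choose a : ℝ) * ((n-m).choose j : ℝ)) *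
        (if j + (m - a) = m - ℓ then p ^ (a + j) * q ^ (n - (a + j)) else 0) := by
    rw [Finset.sum_powerset, hx]
    refine Finset.sum_congr rfl fun a _ => ?_
    have hinner : ∀ S ∈ Finset.powersetCard a A,
        (∑ T ∈ Aᶜ.powerset,
          (if T.card + (m - S.card) = m - ℓ
            then p ^ (S.card + T.card) * q ^ (n - (S.card + T.card)) else 0))
        = ∑ j ∈ Finset.range (n-m+1), ((n-m).choose j : ℝ) *
          (if j + (m - a) = m - ℓ then p ^ (a + j) * q ^ (n - (a + j)) else 0) := by
      intro S hS
      rw [(Finset.mem_powersetCard.1 hS).2, Finset.sum_powerset, hBcard]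
      refine Finset.sum_congr rfl fun j _ => ?_
      have hinner2 : ∀ T ∈ Finset.powersetCard j Aᶜ,
          (if T.card + (m - a) = m - ℓ
            then p ^ (a + T.card) * q ^ (n - (a + T.card)) else 0)
          = (if j + (m - a) = m - ℓ then p ^ (a + j) * q ^ (n - (a + j)) else 0) := by
        intro T hT
        rw [(Finset.mem_powersetCard.1 hT).2]
      rw [Finset.sum_congr rfl hinner2, Finset.sum_const, Finset.card_powersetCard,
        hBcard, nsmul_eq_mul]
    rw [Finset.sum_congr rfl hinner, Finset.sum_const, Finset.card_powersetCard, hx,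
      nsmul_eq_mul, Finset.mul_sum]
    refine Finset.sum_congr rfl fun j _ => ?_
    ring
  rw [hstep4, Finset.sum_comm]
  -- Step 5: collapse the inner sum
  have hstep5 : ∀ j ∈ Finset.range (n-m+1),
      (∑ a ∈ Finset.range (m+1),
        ((m.choose a : ℝ) * ((n-m).choose j : ℝ)) *
        (if j + (m - a) = m - ℓ then p ^ (a + j) * q ^ (n - (a + j)) else 0))
      = ((n-m).choose j : ℝ) * (m.choose (j + ℓ) : ℝ) *
          (p ^ (2*j + ℓ) * q ^ (n - (2*j + ℓ))) := by
    intro j _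
    have hcong : ∀ a ∈ Finset.range (m+1),
        ((m.choose a : ℝ) * ((n-m).choose j : ℝ)) *
        (if j + (m - a) = m - ℓ then p ^ (a + j) * q ^ (n - (a + j)) else 0)
        = (if a = j + ℓ then
            ((m.choose a : ℝ) * ((n-m).choose j : ℝ)) * (p ^ (a + j) * q ^ (n - (a + j)))
          else 0) := by
      intro a ha
      rw [Finset.mem_range] at ha
      rw [if_congr (show (j + (m - a) = m - ℓ) ↔ (a = j + ℓ) by omega) rfl rfl,
        mul_ite, mul_zero]
    rw [Finset.sum_congr rfl hcong, Finset.sum_ite_eq' (Finset.range (m+1))]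
    by_cases hcase : j + ℓ ∈ Finset.range (m+1)
    · rw [if_pos hcase]
      have : j + ℓ + j = 2*j + ℓ := by omega
      rw [this]
      ring
    · rw [if_neg hcase]
      rw [Finset.mem_range] at hcase
      have : m.choose (j + ℓ) = 0 := Nat.choose_eq_zero_of_lt (by omega)
      rw [this]
      simp
  rw [Finset.sum_congr rfl hstep5]
  -- Step 6: shrink the range and conclude
  have hsub : Finset.range (min (n-m) (m-ℓ) + 1) ⊆ Finset.range (n-m+1) :=
    Finset.range_subset_range.2 (by omega)
  rw [← Finset.sum_subset hsub (fun j hj hj' => by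
    rw [Finset.mem_range] at hj
    rw [Finset.mem_range, not_lt] at hj'
    have hjm : m < j + ℓ := by omega
    rw [Nat.choose_eq_zero_of_lt hjm]
    simp)]
  rw [lam, mul_assoc, Finset.mul_sum, Finset.mul_sum]
  refine Finset.sum_congr rfl fun j hj => ?_
  rw [Finset.mem_range] at hj
  have hk : 2*j + ℓ ≤ n := by omega
  rw [pow_aux n (2*j+ℓ) hn hk]
  have hc : (0:ℝ) < (n:ℝ) - 1 := by
    have : (2:ℝ) ≤ n := by exact_mod_cast hn
    linarith
  have hz : -(((2*j+ℓ : ℕ)) : ℤ) = (-(ℓ:ℤ)) + (-(2*(j:ℤ))) := by push_cast; ring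
  rw [hz, zpow_add₀ hc.ne']
  ring


end EA
end

section
/- Fix n ≥ 1, and let c, d ≥ 0 be constants. Suppose real sequences (a_{n,m})_{0≤m≤n} and (b_{n,m})_{1≤m≤n} satisfy Σ_{1≤ℓ≤m} λ*_{n,m,ℓ}·(a_{n,m} − a_{n,m−ℓ}) = b_{n,m} for all 1 ≤ m ≤ n, with |a_{n,0}| ≤ d and |b_{n,m}| ≤ c/n for all 1 ≤ m ≤ n. Then |a_{n,m}| ≤ c·H_m + d for all 0 ≤ m ≤ n. -/
open Filter MeasureTheory Real

namespace EA

lemma lamStar_nonneg (n m ℓ : ℕ) : 0 ≤ lamStar n m ℓ := by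
  unfold lamStar
  apply Finset.sum_nonneg
  intro j _
  positivity

lemma lamStar_one_ge (n m : ℕ) : (m:ℝ)/n ≤ lamStar n m 1 := by
  unfold lamStar
  have h0 : (0:ℕ) ∈ Finset.range (min (n+1-m) (m-1) + 1) :=
    Finset.mem_range.mpr (Nat.succ_pos _)
  calc (m:ℝ)/n = ((n+1-m).choose 0 : ℝ) * (m.choose (0+1) : ℝ) * (n:ℝ)^(-((1:ℤ)+2*0)) := by
        simp [div_eq_mul_inv, zpow_neg]
    _ ≤ _ := Finset.single_le_sum
      (f := fun j => ((n+1-m).choose j : ℝ) * (m.choose (j+1) : ℝ) * (n:ℝ)^(-((1:ℤ)+2*(j:ℤ))))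
      (fun j _ => mul_nonneg (mul_nonneg (Nat.cast_nonneg _) (Nat.cast_nonneg _))
        (zpow_nonneg (Nat.cast_nonneg n) _)) h0

lemma Hm_mono {k l : ℕ} (h : k ≤ l) : Hm k ≤ Hm l := by
  unfold Hm
  apply Finset.sum_le_sum_of_subset_of_nonneg
  · exact Finset.range_subset_range.mpr h
  · intro j _ _; positivity

lemma Hm_nonneg (k : ℕ) : 0 ≤ Hm k := by
  unfold Hm
  apply Finset.sum_nonneg
  intro j _; positivity

/-- Lemma 4 of the paper. -/
theorem recurrence_harmonic_bound (n : ℕ) (hn : 1 ≤ n) (c d : ℝ) (hc : 0 ≤ c) (hd : 0 ≤ d)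
    (a b : ℕ → ℝ)
    (hrec : ∀ m, 1 ≤ m → m ≤ n →
      ∑ ℓ ∈ Finset.range m, lamStar n m (ℓ+1) * (a m - a (m - (ℓ+1))) = b m)
    (ha0 : |a 0| ≤ d)
    (hb : ∀ m, 1 ≤ m → m ≤ n → |b m| ≤ c / n) :
    ∀ m, m ≤ n → |a m| ≤ c * Hm m + d := by
  intro m
  induction m using Nat.strong_induction_on with
  | _ m ih =>
    intro hmn
    rcases Nat.eq_zero_or_pos m with hm0 | hm
    · subst hm0
      simp only [Hm, Finset.range_zero, Finset.sum_empty, mul_zero, zero_add]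
      exact ha0
    · set Λ : ℝ := ∑ ℓ ∈ Finset.range m, lamStar n m (ℓ+1) with hΛdef
      have hmpos : (0:ℝ) < m := by exact_mod_cast hm
      have hnpos : (0:ℝ) < n := by exact_mod_cast hn
      have hΛge : (m:ℝ)/n ≤ Λ := by
        have h0 : (0:ℕ) ∈ Finset.range m := Finset.mem_range.mpr hm
        calc (m:ℝ)/n ≤ lamStar n m 1 := lamStar_one_ge n m
          _ ≤ Λ := Finset.single_le_sum (fun ℓ _ => lamStar_nonneg n m (ℓ+1)) h0
      have hΛpos : 0 < Λ := lt_of_lt_of_le (div_pos hmpos hnpos) hΛge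
      set X : ℝ := c * Hm (m-1) + d with hXdef
      have hXnn : 0 ≤ X := by
        have := Hm_nonneg (m-1); positivity
      have key : Λ * a m = b m + ∑ ℓ ∈ Finset.range m, lamStar n m (ℓ+1) * a (m-(ℓ+1)) := by
        have h := hrec m hm hmn
        simp only [mul_sub, Finset.sum_sub_distrib, ← Finset.sum_mul] at h
        rw [hΛdef]
        linarith
      have hsum : |∑ ℓ ∈ Finset.range m, lamStar n m (ℓ+1) * a (m-(ℓ+1))| ≤ Λ * X := by
        calc |∑ ℓ ∈ Finset.range m, lamStar n m (ℓ+1) * a (m-(ℓ+1))|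
            ≤ ∑ ℓ ∈ Finset.range m, |lamStar n m (ℓ+1) * a (m-(ℓ+1))| :=
              Finset.abs_sum_le_sum_abs _ _
          _ ≤ ∑ ℓ ∈ Finset.range m, lamStar n m (ℓ+1) * X := by
              apply Finset.sum_le_sum
              intro ℓ _
              rw [abs_mul, abs_of_nonneg (lamStar_nonneg n m (ℓ+1))]
              apply mul_le_mul_of_nonneg_left _ (lamStar_nonneg n m (ℓ+1))
              have hlt : m - (ℓ+1) < m := Nat.sub_lt hm (Nat.succ_pos ℓ)
              have hle : m - (ℓ+1) ≤ n := le_trans (Nat.sub_le m (ℓ+1)) hmn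
              calc |a (m-(ℓ+1))| ≤ c * Hm (m-(ℓ+1)) + d := ih _ hlt hle
                _ ≤ X := by
                    have : Hm (m-(ℓ+1)) ≤ Hm (m-1) :=
                      Hm_mono (Nat.sub_le_sub_left (Nat.succ_le_of_lt (Nat.succ_pos ℓ)) m)
                    rw [hXdef]
                    nlinarith
          _ = Λ * X := by rw [hΛdef, Finset.sum_mul]
      have hmain : Λ * |a m| ≤ c/n + Λ * X := by
        have habs : |Λ * a m| ≤ c/n + Λ * X := by
          rw [key]
          calc |b m + ∑ ℓ ∈ Finset.range m, lamStar n m (ℓ+1) * a (m-(ℓ+1))|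
            ≤ |b m| + |∑ ℓ ∈ Finset.range m, lamStar n m (ℓ+1) * a (m-(ℓ+1))| := abs_add_le _ _
            _ ≤ c/n + Λ * X := add_le_add (hb m hm hmn) hsum
        rwa [abs_mul, abs_of_pos hΛpos] at habs
      have h1 : c/n ≤ Λ * (c/m) := by
        calc c/n = (m:ℝ)/n * (c/m) := by
              field_simp
          _ ≤ Λ * (c/m) := mul_le_mul_of_nonneg_right hΛge (by positivity)
      have h2 : |a m| ≤ c/m + X := by
        have h3 : Λ * |a m| ≤ Λ * (c/m + X) := by nlinarith
        exact le_of_mul_le_mul_left (by linarith [h3]) hΛpos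
      have hHm : Hm m = Hm (m-1) + 1/m := by
        obtain ⟨k, rfl⟩ : ∃ k, m = k + 1 := ⟨m-1, (Nat.succ_pred_eq_of_pos hm).symm⟩
        rw [Hm, Finset.sum_range_succ, ← Hm, Nat.add_sub_cancel]
        push_cast
        ring
      rw [hHm, hXdef] at *
      calc |a m| ≤ c/m + (c * Hm (m-1) + d) := h2
        _ = c * (Hm (m-1) + 1/m) + d := by ring

end EA
end

section
/- Fix 0 < p < 1, set q := 1 − p, and fix n ≥ 1. Let the functions Q_{n,m}(t), for 1 ≤ m ≤ n and 0 < t < 1, be defined recursively by Q_{n,m}(t) = (p q^{n−m} t/(1 − (1 − p q^{n−m}) t)) · (2^{1−m} + Σ_{1≤ℓ<m} Q_{n,ℓ}(t)/2^{m−ℓ}). Then for all 1 ≤ m ≤ n and 0 < t < 1, Q_{n,m}(t) = (1/(1 − (1 − 1/t)/(p q^{n−m}))) · ∏_{1≤j<m} (1 − (1 − 1/t)/(2 p q^{n−j})) / (1 − (1 − 1/t)/(p q^{n−j})), where all denominators are nonzero for 0 < t < 1. -/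
open Filter MeasureTheory Real

namespace EA

lemma u_neg {t : ℝ} (ht0 : 0 < t) (ht1 : t < 1) : 1 - 1/t < 0 := by
  have : 1 < 1/t := (one_lt_div ht0).mpr ht1
  linarith

lemma Dpos {a t : ℝ} (ha : 0 < a) (ht0 : 0 < t) (ht1 : t < 1) :
    0 < 1 - (1 - 1/t)/a := by
  have h := u_neg ht0 ht1
  have : (1 - 1/t)/a < 0 := div_neg_of_neg_of_pos h ha
  linarith

lemma pref_eq {a t : ℝ} (ha : 0 < a) (ht0 : 0 < t) (ht1 : t < 1) :
    a * t / (1 - (1 - a) * t) = 1 / (1 - (1 - 1/t)/a) := by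
  have h1 := u_neg ht0 ht1
  have h2 : 0 < a - (1 - 1/t) := by linarith
  have h3 : 1 - (1-a)*t = t * (a - (1 - 1/t)) := by
    field_simp
    ring
  have h4 : (0:ℝ) < 1 - (1 - 1/t)/a := Dpos ha ht0 ht1
  rw [h3]
  rw [div_eq_div_iff (by positivity) (by positivity)]
  field_simp

lemma QLO_main (p : ℝ) (hp0 : 0 < p) (hp1 : p < 1) (n : ℕ) (t : ℝ)
    (ht0 : 0 < t) (ht1 : t < 1) :
    ∀ m : ℕ, m + 1 ≤ n →
      ((2:ℝ)^(-(m:ℤ)) + ∑ ℓ ∈ Finset.range m, QLO p n (m-ℓ) t / 2^(ℓ+1)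
        = ∏ j ∈ Finset.Ico 1 (m+1),
            (1 - (1 - 1/t)/(2*p*(1-p)^(n-j))) / (1 - (1 - 1/t)/(p*(1-p)^(n-j)))) ∧
      QLO p n (m+1) t
        = (1/(1 - (1 - 1/t)/(p*(1-p)^(n-(m+1))))) *
            ∏ j ∈ Finset.Ico 1 (m+1),
              (1 - (1 - 1/t)/(2*p*(1-p)^(n-j))) / (1 - (1 - 1/t)/(p*(1-p)^(n-j))) := by
  have hq : (0:ℝ) < 1 - p := by linarith
  have ha : ∀ k : ℕ, (0:ℝ) < p * (1-p)^k := fun k => by positivity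
  intro m
  induction m with
  | zero =>
    intro _
    constructor
    · simp
    · show QLO p n (0+1) t = _
      rw [QLO]
      simp only [Finset.range_zero, Finset.sum_empty, Finset.Ico_self,
        Finset.prod_empty, Nat.cast_zero, neg_zero, zpow_zero, add_zero, mul_one]
      rw [pref_eq (ha (n-1)) ht0 ht1]
  | succ m ih =>
    intro hmn
    have hm1 : m + 1 ≤ n := by omega
    obtain ⟨hF, hQ⟩ := ih hm1
    set P : ℝ := ∏ j ∈ Finset.Ico 1 (m+1),
        (1 - (1 - 1/t)/(2*p*(1-p)^(n-j))) / (1 - (1 - 1/t)/(p*(1-p)^(n-j))) with hP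
    have hD : (0:ℝ) < 1 - (1 - 1/t)/(p*(1-p)^(n-(m+1))) := Dpos (ha _) ht0 ht1
    -- the new sum
    have hsum : (2:ℝ)^(-((m+1:ℕ):ℤ))
        + ∑ ℓ ∈ Finset.range (m+1), QLO p n (m+1-ℓ) t / 2^(ℓ+1)
        = ((2:ℝ)^(-(m:ℤ)) + ∑ ℓ ∈ Finset.range m, QLO p n (m-ℓ) t / 2^(ℓ+1)) / 2
          + QLO p n (m+1) t / 2 := by
      rw [Finset.sum_range_succ']
      have e1 : ∀ ℓ, m + 1 - (ℓ+1) = m - ℓ := fun ℓ => by omega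
      have e2 : ((2:ℝ))^(-((m+1:ℕ):ℤ)) = (2:ℝ)^(-(m:ℤ)) / 2 := by
        have h : (-((m+1:ℕ):ℤ)) = -(m:ℤ) - 1 := by push_cast; ring
        rw [h, zpow_sub₀ (by norm_num : (2:ℝ) ≠ 0), zpow_one]
      rw [e2]
      simp only [e1]
      rw [add_div, Finset.sum_div]
      have e3 : ∀ ℓ : ℕ, QLO p n (m-ℓ) t / 2^(ℓ+1+1)
          = QLO p n (m-ℓ) t / 2^(ℓ+1) / 2 := fun ℓ => by
        rw [pow_succ]; ring
      simp only [e3, Nat.sub_zero]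
      ring
    -- product step
    have hstep : P * ((1 - (1 - 1/t)/(2*p*(1-p)^(n-(m+1))))
          / (1 - (1 - 1/t)/(p*(1-p)^(n-(m+1)))))
        = ∏ j ∈ Finset.Ico 1 (m+1+1),
            (1 - (1 - 1/t)/(2*p*(1-p)^(n-j))) / (1 - (1 - 1/t)/(p*(1-p)^(n-j))) := by
      rw [Finset.prod_Ico_succ_top (by omega : 1 ≤ m+1)]
    have hN : 1 - (1 - 1/t)/(2*p*(1-p)^(n-(m+1)))
        = ((1 - (1 - 1/t)/(p*(1-p)^(n-(m+1)))) + 1) / 2 := by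
      have hane : p * (1-p)^(n-(m+1)) ≠ 0 := ne_of_gt (ha _)
      field_simp
      ring
    have hF' : (2:ℝ)^(-((m+1:ℕ):ℤ))
        + ∑ ℓ ∈ Finset.range (m+1), QLO p n (m+1-ℓ) t / 2^(ℓ+1)
        = ∏ j ∈ Finset.Ico 1 (m+1+1),
            (1 - (1 - 1/t)/(2*p*(1-p)^(n-j))) / (1 - (1 - 1/t)/(p*(1-p)^(n-j))) := by
      rw [hsum, hF, hQ, ← hstep, hN]
      have hDne : (1 - (1 - 1/t)/(p*(1-p)^(n-(m+1)))) ≠ 0 := ne_of_gt hD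
      have key : ∀ D : ℝ, D ≠ 0 → P/2 + 1/D * P/2 = P * (((D+1)/2)/D) := by
        intro D hD0
        field_simp
      exact key _ hDne
    refine ⟨hF', ?_⟩
    show QLO p n (m+1+1) t = _
    rw [QLO, pref_eq (ha (n-(m+1+1))) ht0 ht1, hF']

/-- Proposition 2 of the paper. A finite-product representation for
`Q_{n,m}`, all denominators being nonzero for `0 < t < 1`. -/
theorem QLO_closed_form (p : ℝ) (hp0 : 0 < p) (hp1 : p < 1) (n : ℕ) (hn : 1 ≤ n) :
    ∀ m, 1 ≤ m → m ≤ n → ∀ t : ℝ, 0 < t → t < 1 →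
      ((1 - (1 - 1/t)/(p*(1-p)^(n-m)) ≠ 0) ∧
        (∀ j, 1 ≤ j → j < m → 1 - (1 - 1/t)/(p*(1-p)^(n-j)) ≠ 0)) ∧
      QLO p n m t
        = (1/(1 - (1 - 1/t)/(p*(1-p)^(n-m)))) *
            ∏ j ∈ Finset.Ico 1 m,
              (1 - (1 - 1/t)/(2*p*(1-p)^(n-j))) / (1 - (1 - 1/t)/(p*(1-p)^(n-j))) := by
  intro m hm1 hmn t ht0 ht1
  obtain ⟨m', rfl⟩ : ∃ m', m = m'+1 := ⟨m-1, by omega⟩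
  have hq : (0:ℝ) < 1-p := by linarith
  have ha : ∀ k : ℕ, (0:ℝ) < p*(1-p)^k := fun k => by positivity
  refine ⟨⟨ne_of_gt (Dpos (ha _) ht0 ht1), fun j _ _ => ne_of_gt (Dpos (ha _) ht0 ht1)⟩, ?_⟩
  exact (QLO_main p hp0 hp1 n t ht0 ht1 m' hmn).2

end EA
end

section
/- Fix 0 < p < 1 and set q := 1 − p. Let ν_{n,m} be defined by ν_{n,m} = 1/(p q^{n−m}) + Σ_{1≤ℓ<m} ν_{n,ℓ}/2^{m−ℓ} for 1 ≤ m ≤ n, and let s_{n,m} be defined by s_{n,m} = (2ν_{n,m} − 1)/(p q^{n−m}) + Σ_{1≤ℓ<m} s_{n,ℓ}/2^{m−ℓ} for 1 ≤ m ≤ n. Then for all 1 ≤ m ≤ n: ν_{n,m} = (1/(p q^{n−1}))·((1 − q^{m−1})/(2p) + q^{m−1}), and s_{n,m} − ν_{n,m}² = −ν_{n,m} + (3q² − (4q² − 1)q^{2m})/(4p³(1+q)q^{2n}). -/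
open Filter MeasureTheory Real

namespace EA

/-! The weights `2^{-(m-ℓ)}` halve when `m` grows by one, so subtracting half of the `m`-th
equation from the `(m+1)`-st turns both full-history recurrences into first-order ones,
`x_{m+2} = x_{m+1} + b_{m+2} - b_{m+1}/2`. The closed forms then follow by induction on `m`,
after writing `1/(p q^{n-m}) = q^m/(p q^n)` to get rid of the truncated subtraction. -/

theorem sum_range_succ_sub_div_two_pow (f : ℕ → ℝ) (m : ℕ) :
    ∑ ℓ ∈ Finset.range (m + 1), f (m + 1 - ℓ) / 2 ^ (ℓ + 1)
      = f (m + 1) / 2 + (∑ ℓ ∈ Finset.range m, f (m - ℓ) / 2 ^ (ℓ + 1)) / 2 := by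
  rw [Finset.sum_range_succ', Finset.sum_div, add_comm]
  congr 1
  · simp
  · refine Finset.sum_congr rfl fun ℓ _ => ?_
    rw [Nat.add_sub_add_right, pow_succ]
    ring

theorem succ_succ_of_eq_add_sum_div_two_pow {x b : ℕ → ℝ}
    (hx : ∀ m, x (m + 1) = b (m + 1) + ∑ ℓ ∈ Finset.range m, x (m - ℓ) / 2 ^ (ℓ + 1))
    (m : ℕ) : x (m + 2) = x (m + 1) + b (m + 2) - b (m + 1) / 2 := by
  rw [hx (m + 1), sum_range_succ_sub_div_two_pow, hx m]
  ring

theorem nuLO_succ_succ (p : ℝ) (n m : ℕ) :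
    nuLO p n (m + 2) = nuLO p n (m + 1) + 1 / (p * (1 - p) ^ (n - (m + 2)))
      - 1 / (p * (1 - p) ^ (n - (m + 1))) / 2 :=
  succ_succ_of_eq_add_sum_div_two_pow (x := nuLO p n)
    (b := fun k => 1 / (p * (1 - p) ^ (n - k))) (fun m => nuLO.eq_2 p n m) m

theorem sLO_succ_succ (p : ℝ) (n m : ℕ) :
    sLO p n (m + 2) = sLO p n (m + 1)
      + (2 * nuLO p n (m + 2) - 1) / (p * (1 - p) ^ (n - (m + 2)))
      - (2 * nuLO p n (m + 1) - 1) / (p * (1 - p) ^ (n - (m + 1))) / 2 :=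
  succ_succ_of_eq_add_sum_div_two_pow (x := sLO p n)
    (b := fun k => (2 * nuLO p n k - 1) / (p * (1 - p) ^ (n - k))) (fun m => sLO.eq_2 p n m) m

theorem nuLO_one (p : ℝ) (n : ℕ) : nuLO p n 1 = 1 / (p * (1 - p) ^ (n - 1)) := by
  simp [nuLO]

theorem sLO_one (p : ℝ) (n : ℕ) :
    sLO p n 1 = (2 * nuLO p n 1 - 1) / (p * (1 - p) ^ (n - 1)) := by
  simp [sLO]

theorem nuLO_succ_eq {p : ℝ} (hp : p ≠ 0) (hq : 1 - p ≠ 0) {n : ℕ} :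
    ∀ m, m + 1 ≤ n →
      nuLO p n (m + 1) = 1 / (p * (1 - p) ^ (n - 1)) * ((1 - (1 - p) ^ m) / (2 * p) + (1 - p) ^ m)
  | 0, _ => by simp [nuLO_one]
  | m + 1, hmn => by
    rw [nuLO_succ_succ, nuLO_succ_eq hp hq m (by omega), pow_sub₀ _ hq hmn,
      pow_sub₀ _ hq (by omega : m + 1 ≤ n), pow_sub₀ _ hq (by omega : 1 ≤ n)]
    field_simp
    ring

theorem sLO_succ_sub_sq {p : ℝ} (hp : p ≠ 0) (hq : 1 - p ≠ 0) (h2q : 1 + (1 - p) ≠ 0) {n : ℕ} :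
    ∀ m, m + 1 ≤ n →
      sLO p n (m + 1) - nuLO p n (m + 1) ^ 2 = -nuLO p n (m + 1)
        + (3 * (1 - p) ^ 2 - (4 * (1 - p) ^ 2 - 1) * (1 - p) ^ (2 * (m + 1)))
          / (4 * p ^ 3 * (1 + (1 - p)) * (1 - p) ^ (2 * n))
  | 0, hn => by
    rw [sLO_one, nuLO_one, pow_sub₀ _ hq hn, pow_mul]
    field_simp
    ring
  | m + 1, hmn => by
    have ih := sLO_succ_sub_sq (n := n) hp hq h2q m (by omega)
    rw [sub_eq_iff_eq_add] at ih
    rw [sLO_succ_succ, ih, nuLO_succ_eq hp hq m (by omega), nuLO_succ_eq hp hq (m + 1) hmn,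
      pow_sub₀ _ hq hmn, pow_sub₀ _ hq (by omega : m + 1 ≤ n), pow_sub₀ _ hq (by omega : 1 ≤ n)]
    field_simp
    ring

/-- Theorem 12 of the paper. Closed forms for the mean and the
variance of the LeadingOnes optimization time. -/
theorem leadingones_mean_variance (p : ℝ) (hp0 : 0 < p) (hp1 : p < 1) (n : ℕ) :
    ∀ m, 1 ≤ m → m ≤ n →
      nuLO p n m = (1/(p*(1-p)^(n-1))) * ((1 - (1-p)^(m-1))/(2*p) + (1-p)^(m-1)) ∧
      sLO p n m - (nuLO p n m)^2
        = -nuLO p n m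
            + (3*(1-p)^2 - (4*(1-p)^2 - 1)*(1-p)^(2*m))
                / (4*p^3*(1+(1-p))*(1-p)^(2*n)) := by
  have hp : p ≠ 0 := hp0.ne'
  have hq : 1 - p ≠ 0 := sub_ne_zero.mpr hp1.ne'
  intro m hm hmn
  obtain ⟨k, rfl⟩ := Nat.exists_eq_add_of_le' hm
  rw [Nat.add_sub_cancel]
  exact ⟨nuLO_succ_eq hp hq k hmn, sLO_succ_sub_sq hp hq (by linarith) k hmn⟩

end EA
end
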